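/- Assume that B is nilpotent. Then there exists a constant c > 0 such that for every t > 0 and every unit vector ξ ∈ 𝕊^{n−1} ∩ S^⊥, (∫₀¹ |√Q e^{αtBᵀ} ξ|² dα)^{1/2} ≤ c (∫₀¹ |√Q e^{αtBᵀ} ξ|^{2s} dα)^{1/(2s)}. -/

import Mathlib

/-! If `Bᵏ = 0`, then `α ↦ √Q e^{αtBᵀ} ξ` is a vector-valued polynomial of degree `< k`, so
`|√Q e^{αtBᵀ} ξ|²` is a polynomial in `α` of degree `≤ 2k`, whatever `t` and `ξ`. On the
finite-dimensional space of such polynomials, `p ↦ ∫₀¹ |p|` and `p ↦ (∫₀¹ |p|^s)^{1/s}` are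
continuous and positively homogeneous, and the second vanishes only at `0` (a nonzero polynomial
has finitely many roots); compactness of the unit sphere makes them comparable. Applied to
`p = |√Q e^{αtBᵀ} ξ|²` this gives `∫₀¹ |·|² ≤ C (∫₀¹ |·|^{2s})^{1/s}`; take square roots. -/

open Matrix MeasureTheory

/-- The canonical Euclidean norm on `ℝⁿ`. -/
noncomputable def euclNorm {n : ℕ} (v : Fin n → ℝ) : ℝ := Real.sqrt (∑ i, v i ^ 2)

section
open scoped ComplexOrder
/-- The positive semidefinite square root, as `Matrix.PosSemidef.sqrt` was defined in Mathlib
(December 2024); that declaration has since been removed. -/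
noncomputable def Matrix.PosSemidef.sqrt {𝕜 : Type*} [RCLike 𝕜] {m : Type*} [Fintype m]
    [DecidableEq m] {A : Matrix m m 𝕜} (hA : A.PosSemidef) : Matrix m m 𝕜 :=
  hA.1.eigenvectorUnitary.1 * diagonal ((↑) ∘ (Real.sqrt ∘ hA.1.eigenvalues)) *
    (star hA.1.eigenvectorUnitary : Matrix m m 𝕜)
end

/-- The canonical Euclidean scalar product on `ℝⁿ`. -/
def euclInner {n : ℕ} (u v : Fin n → ℝ) : ℝ := ∑ i, u i * v i

/-- Membership in `S = ⋂_{j=0}^{n-1} Ker(√Q (Bᵀ)^j)`, where `sq` stands for `√Q`. -/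
def memS (n : ℕ) (B sq : Matrix (Fin n) (Fin n) ℝ) (η : Fin n → ℝ) : Prop :=
  ∀ j < n, (sq * Bᵀ ^ j).mulVec η = 0

/-- Membership in `S^⊥`, the Euclidean orthogonal complement of `S`. -/
def memSperp (n : ℕ) (B sq : Matrix (Fin n) (Fin n) ℝ) (ξ₀ : Fin n → ℝ) : Prop :=
  ∀ η : Fin n → ℝ, memS n B sq η → euclInner ξ₀ η = 0

/-- Membership in `V_k^⊥`, where `V_k = ⋂_{j=0}^{k} Ker(√Q (Bᵀ)^j)`. -/
def memVperp (n : ℕ) (B sq : Matrix (Fin n) (Fin n) ℝ) (k : ℕ) (ξ₀ : Fin n → ℝ) : Prop :=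
  ∀ η : Fin n → ℝ, (∀ j ≤ k, (sq * Bᵀ ^ j).mulVec η = 0) → euclInner ξ₀ η = 0

/-- The index `k_{ξ₀} = min {0 ≤ k ≤ r : ξ₀ ∈ V_k^⊥}` of a vector `ξ₀ ∈ S^⊥`. -/
noncomputable def kIndex (n : ℕ) (B sq : Matrix (Fin n) (Fin n) ℝ) (r : ℕ)
    (ξ₀ : Fin n → ℝ) : ℕ :=
  sInf {k | k ≤ r ∧ memVperp n B sq k ξ₀}

/-- `r` is the smallest integer such that `S = ⋂_{j=0}^{r} Ker(√Q (Bᵀ)^j)`. -/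
def IsSmallestr (n : ℕ) (B sq : Matrix (Fin n) (Fin n) ℝ) (r : ℕ) : Prop :=
  IsLeast {k | ∀ η : Fin n → ℝ,
    (∀ j ≤ k, (sq * Bᵀ ^ j).mulVec η = 0) ↔ memS n B sq η} r

/-- The symbol `a_t(ξ) = (1/2) ∫₀¹ |√Q e^{α t Bᵀ} ξ|^{2s} dα`. -/
noncomputable def symb (n : ℕ) (B sq : Matrix (Fin n) (Fin n) ℝ) (s t : ℝ)
    (ξ : Fin n → ℝ) : ℝ :=
  (1 / 2) * ∫ α in (0:ℝ)..1, euclNorm ((sq * NormedSpace.exp ((α * t) • Bᵀ)).mulVec ξ) ^ (2 * s)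

open Polynomial Finset

theorem exists_le_mul_of_homogeneous {E : Type*} [NormedAddCommGroup E] [NormedSpace ℝ E]
    [FiniteDimensional ℝ E] {F G : E → ℝ} (hF : Continuous F) (hG : Continuous G)
    (hF_smul : ∀ ρ : ℝ, 0 ≤ ρ → ∀ x, F (ρ • x) = ρ * F x)
    (hG_smul : ∀ ρ : ℝ, 0 ≤ ρ → ∀ x, G (ρ • x) = ρ * G x)
    (hG_pos : ∀ x, x ≠ 0 → 0 < G x) :
    ∃ C : ℝ, 0 < C ∧ ∀ x, F x ≤ C * G x := by
  have hG_sphere : ∀ u ∈ Metric.sphere (0 : E) 1, 0 < G u := fun u hu =>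
    hG_pos u (ne_zero_of_mem_sphere one_ne_zero ⟨u, hu⟩)
  obtain ⟨M, hM⟩ := (isCompact_sphere (0 : E) 1).exists_bound_of_continuousOn
    (hF.continuousOn.div hG.continuousOn fun u hu => (hG_sphere u hu).ne')
  have hF_sphere : ∀ u ∈ Metric.sphere (0 : E) 1, F u ≤ M * G u := fun u hu =>
    (div_le_iff₀ (hG_sphere u hu)).1 ((le_abs_self _).trans (hM u hu))
  refine ⟨|M| + 1, by positivity, fun x => ?_⟩
  rcases eq_or_ne x 0 with rfl | hx
  · have hF0 : F 0 = 0 := by simpa using hF_smul 0 le_rfl 0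
    have hG0 : G 0 = 0 := by simpa using hG_smul 0 le_rfl 0
    simp [hF0, hG0]
  · have hu : ‖x‖⁻¹ • x ∈ Metric.sphere (0 : E) 1 := by simp [norm_smul, hx]
    have hx_eq : x = ‖x‖ • ‖x‖⁻¹ • x := by simp [smul_smul, hx]
    have hGu := hG_sphere _ hu
    rw [hx_eq, hF_smul _ (norm_nonneg x), hG_smul _ (norm_nonneg x), mul_left_comm]
    gcongr
    exact (hF_sphere _ hu).trans (by gcongr; linarith [le_abs_self M])

section IntervalLpNorm

variable {a b r s : ℝ}

noncomputable def intervalLpNorm (a b r : ℝ) (f : ℝ → ℝ) : ℝ :=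
  (∫ x in a..b, |f x| ^ r) ^ r⁻¹

theorem integral_abs_rpow_nonneg (hab : a ≤ b) (r : ℝ) (f : ℝ → ℝ) :
    0 ≤ ∫ x in a..b, |f x| ^ r :=
  intervalIntegral.integral_nonneg hab fun _ _ => Real.rpow_nonneg (abs_nonneg _) r

theorem intervalLpNorm_nonneg (hab : a ≤ b) (f : ℝ → ℝ) : 0 ≤ intervalLpNorm a b r f :=
  Real.rpow_nonneg (integral_abs_rpow_nonneg hab r f) _

theorem intervalLpNorm_sq (hab : a ≤ b) (r : ℝ) (f : ℝ → ℝ) :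
    intervalLpNorm a b r (fun x => f x ^ 2) = intervalLpNorm a b (2 * r) f ^ 2 := by
  simp only [intervalLpNorm, abs_pow, ← Real.rpow_natCast_mul (abs_nonneg _), Nat.cast_ofNat]
  rw [← Real.rpow_mul_natCast (integral_abs_rpow_nonneg hab _ f)]
  congr 1
  push_cast
  field_simp

theorem intervalLpNorm_smul {ρ : ℝ} (hab : a ≤ b) (hr : r ≠ 0) (hρ : 0 ≤ ρ) (f : ℝ → ℝ) :
    intervalLpNorm a b r (ρ • f) = ρ * intervalLpNorm a b r f := by
  simp only [intervalLpNorm, Pi.smul_apply, smul_eq_mul, abs_mul, abs_of_nonneg hρ,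
    Real.mul_rpow hρ (abs_nonneg _), intervalIntegral.integral_const_mul,
    Real.mul_rpow (Real.rpow_nonneg hρ r) (integral_abs_rpow_nonneg hab r f),
    Real.rpow_rpow_inv hρ hr]

theorem intervalLpNorm_eval_pos (hab : a < b) (hr : 0 < r) {p : ℝ[X]} (hp : p ≠ 0) :
    0 < intervalLpNorm a b r p.eval := by
  refine Real.rpow_pos_of_pos ?_ _
  have hcont : Continuous fun x => |p.eval x| ^ r :=
    p.continuous.abs.rpow_const fun _ => Or.inr hr.le
  rw [intervalIntegral.integral_pos_iff_support_of_nonneg_ae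
    (.of_forall fun x => Real.rpow_nonneg (abs_nonneg _) r) (hcont.intervalIntegrable a b)]
  have hroots : volume {x : ℝ | p.IsRoot x} = 0 := (finite_setOfPred_isRoot hp).measure_zero _
  have hsub : Set.Ioc a b \ {x | p.IsRoot x} ⊆
      Function.support (fun x => |p.eval x| ^ r) ∩ Set.Ioc a b := fun x ⟨hx, hroot⟩ =>
    ⟨(Real.rpow_pos_of_pos (abs_pos.2 hroot) r).ne', hx⟩
  refine ⟨hab, lt_of_lt_of_le ?_ (measure_mono hsub)⟩
  rw [measure_sdiff_null hroots, Real.volume_Ioc]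
  simpa using hab

theorem continuous_intervalLpNorm_sum_mul_pow {D : ℕ} (hr : 0 < r) :
    Continuous fun c : Fin D → ℝ => intervalLpNorm a b r fun x => ∑ i, c i * x ^ (i : ℕ) := by
  refine Continuous.rpow_const ?_ fun _ => Or.inr (inv_nonneg.2 hr.le)
  refine intervalIntegral.continuous_parametric_intervalIntegral_of_continuous' ?_ a b
  exact Continuous.rpow_const (by fun_prop) fun _ => Or.inr hr.le

theorem exists_intervalLpNorm_eval_le_mul (D : ℕ) (hab : a < b) (hr : 0 < r)
    (hs : 0 < s) : ∃ C : ℝ, 0 < C ∧ ∀ p ∈ degreeLT ℝ D,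
      intervalLpNorm a b r p.eval ≤ C * intervalLpNorm a b s p.eval := by
  set φ : (Fin D → ℝ) → ℝ → ℝ := fun c x => ∑ i, c i * x ^ (i : ℕ)
  have hφ_eval : ∀ p (hp : p ∈ degreeLT ℝ D), p.eval = φ (degreeLTEquiv ℝ D ⟨p, hp⟩) :=
    fun p hp => funext (eval_eq_sum_degreeLTEquiv hp)
  have hφ_smul : ∀ ρ : ℝ, ∀ c, φ (ρ • c) = ρ • φ c := fun ρ c => by
    funext x; simp [φ, mul_sum, mul_assoc]
  have hφ_pos : ∀ c, c ≠ 0 → 0 < intervalLpNorm a b s (φ c) := fun c hc => by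
    set q := (degreeLTEquiv ℝ D).symm c
    have hq : (q : ℝ[X]) ≠ 0 := by simpa [q] using hc
    have hpos := intervalLpNorm_eval_pos hab hs hq
    rwa [hφ_eval q q.2, Subtype.coe_eta, LinearEquiv.apply_symm_apply] at hpos
  obtain ⟨C, hC, hle⟩ := exists_le_mul_of_homogeneous (F := fun c => intervalLpNorm a b r (φ c))
    (G := fun c => intervalLpNorm a b s (φ c))
    (continuous_intervalLpNorm_sum_mul_pow hr) (continuous_intervalLpNorm_sum_mul_pow hs)
    (fun ρ hρ c => by rw [hφ_smul, intervalLpNorm_smul hab.le hr.ne' hρ])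
    (fun ρ hρ c => by rw [hφ_smul, intervalLpNorm_smul hab.le hs.ne' hρ]) hφ_pos
  exact ⟨C, hC, fun p hp => by simpa only [hφ_eval p hp] using hle _⟩

end IntervalLpNorm

theorem NormedSpace.exp_eq_sum_range_of_pow_eq_zero (𝕂 : Type*) {𝔸 : Type*} [Field 𝕂]
    [CharZero 𝕂] [Ring 𝔸] [Algebra 𝕂 𝔸] [TopologicalSpace 𝔸] [IsTopologicalRing 𝔸] {x : 𝔸}
    {k : ℕ} (hx : x ^ k = 0) :
    NormedSpace.exp x = ∑ j ∈ range k, (j.factorial⁻¹ : 𝕂) • x ^ j := by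
  rw [NormedSpace.exp_eq_tsum 𝕂]
  refine tsum_eq_sum fun j hj => ?_
  rw [pow_eq_zero_of_le (by simpa using hj) hx, smul_zero]

theorem mulVec_exp_smul_eq_sum {m : Type*} [Fintype m] [DecidableEq m] (P M : Matrix m m ℝ)
    {k : ℕ} (hM : M ^ k = 0) (α : ℝ) (ξ : m → ℝ) :
    (P * NormedSpace.exp (α • M)) *ᵥ ξ =
      ∑ j ∈ range k, α ^ j • (j.factorial : ℝ)⁻¹ • (P * M ^ j) *ᵥ ξ := by
  rw [NormedSpace.exp_eq_sum_range_of_pow_eq_zero ℝ (by rw [_root_.smul_pow, hM, smul_zero]),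
    mul_sum, sum_mulVec]
  refine sum_congr rfl fun j _ => ?_
  rw [_root_.smul_pow, smul_smul, Matrix.mul_smul, smul_mulVec, smul_smul, mul_comm]

theorem exists_mem_degreeLT_eval_eq_euclNorm_sq {n : ℕ} (k : ℕ) (w : ℕ → Fin n → ℝ) :
    ∃ p ∈ degreeLT ℝ (2 * k + 1), ∀ α, p.eval α = euclNorm (∑ j ∈ range k, α ^ j • w j) ^ 2 := by
  set W : Fin n → ℝ[X] := fun i => ∑ j ∈ range k, C (w j i) * X ^ j
  have hW_deg : ∀ i, (W i).natDegree ≤ k := fun i =>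
    natDegree_sum_le_of_forall_le _ _ fun j hj =>
      (natDegree_C_mul_X_pow_le _ _).trans (mem_range.1 hj).le
  have hdeg : (∑ i, W i ^ 2).natDegree ≤ 2 * k := natDegree_sum_le_of_forall_le _ _ fun i _ =>
    natDegree_pow_le.trans (Nat.mul_le_mul_left 2 (hW_deg i))
  refine ⟨∑ i, W i ^ 2, mem_degreeLT.2 (degree_le_natDegree.trans_lt
    (by exact_mod_cast Nat.lt_succ_of_le hdeg)), fun α => ?_⟩
  rw [euclNorm, Real.sq_sqrt (sum_nonneg fun i _ => sq_nonneg _), eval_finsetSum]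
  refine sum_congr rfl fun i _ => ?_
  simp only [W, eval_pow, eval_finsetSum, eval_mul, eval_C, eval_X, Finset.sum_apply,
    Pi.smul_apply, smul_eq_mul, mul_comm]

theorem exists_mem_degreeLT_eval_eq_euclNorm_mulVec_exp_sq {n k : ℕ}
    (P A : Matrix (Fin n) (Fin n) ℝ) (hA : A ^ k = 0) (t : ℝ) (ξ : Fin n → ℝ) :
    ∃ p ∈ degreeLT ℝ (2 * k + 1),
      ∀ α, p.eval α = euclNorm ((P * NormedSpace.exp ((α * t) • A)) *ᵥ ξ) ^ 2 := by
  have htA : (t • A) ^ k = 0 := by rw [_root_.smul_pow, hA, smul_zero]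
  simpa only [mul_smul, mulVec_exp_smul_eq_sum _ _ htA] using
    exists_mem_degreeLT_eval_eq_euclNorm_sq k fun j => (j.factorial : ℝ)⁻¹ • (P * (t • A) ^ j) *ᵥ ξ

theorem statement16_general (n : ℕ) (s : ℝ) (hs : 0 < s)
    (B Q : Matrix (Fin n) (Fin n) ℝ) (hQ : Q.PosSemidef) (hB : IsNilpotent B) :
    ∃ c : ℝ, 0 < c ∧
      ∀ t : ℝ, 0 < t → ∀ ξ : Fin n → ℝ, euclNorm ξ = 1 → memSperp n B hQ.sqrt ξ →
        (∫ α in (0:ℝ)..1,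
            euclNorm ((hQ.sqrt * NormedSpace.exp ((α * t) • Bᵀ)).mulVec ξ) ^ 2) ^ ((1:ℝ) / 2) ≤
          c * (∫ α in (0:ℝ)..1,
            euclNorm ((hQ.sqrt * NormedSpace.exp ((α * t) • Bᵀ)).mulVec ξ) ^ (2 * s))
              ^ (1 / (2 * s)) := by
  obtain ⟨k, hk⟩ := hB
  obtain ⟨C, hC, hle⟩ := exists_intervalLpNorm_eval_le_mul (2 * k + 1) zero_lt_one one_pos hs
  refine ⟨C ^ (1 / 2 : ℝ), by positivity, fun t _ ξ _ _ => ?_⟩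
  set N : ℝ → ℝ := fun α => euclNorm ((hQ.sqrt * NormedSpace.exp ((α * t) • Bᵀ)) *ᵥ ξ)
  have hN : ∀ α, 0 ≤ N α := fun α => Real.sqrt_nonneg _
  obtain ⟨p, hp_mem, hp⟩ := exists_mem_degreeLT_eval_eq_euclNorm_mulVec_exp_sq hQ.sqrt Bᵀ
    (by rw [← transpose_pow, hk, transpose_zero]) t ξ
  have key := hle p hp_mem
  rw [show p.eval = fun α => N α ^ 2 from funext hp, intervalLpNorm_sq zero_le_one,
    intervalLpNorm_sq zero_le_one] at key
  have hL2 : (∫ α in (0:ℝ)..1, N α ^ 2) ^ (1 / 2 : ℝ) = intervalLpNorm 0 1 (2 * 1) N := by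
    simp [intervalLpNorm, abs_of_nonneg (hN _)]
  have hL2s : (∫ α in (0:ℝ)..1, N α ^ (2 * s)) ^ (1 / (2 * s)) = intervalLpNorm 0 1 (2 * s) N := by
    simp [intervalLpNorm, abs_of_nonneg (hN _)]
  rw [hL2, hL2s]
  calc intervalLpNorm 0 1 (2 * 1) N = √(intervalLpNorm 0 1 (2 * 1) N ^ 2) :=
        (Real.sqrt_sq (intervalLpNorm_nonneg zero_le_one N)).symm
    _ ≤ √(C * intervalLpNorm 0 1 (2 * s) N ^ 2) := Real.sqrt_le_sqrt key
    _ = C ^ (1 / 2 : ℝ) * intervalLpNorm 0 1 (2 * s) N := by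
        rw [Real.sqrt_mul hC.le, Real.sqrt_sq (intervalLpNorm_nonneg zero_le_one N),
          Real.sqrt_eq_rpow]

/-- When `B` is nilpotent, the estimate of Proposition on `M_t` holds for all `t > 0`. -/
theorem statement16 (n : ℕ) (hn : 1 ≤ n) (s : ℝ) (hs : 0 < s)
    (B Q : Matrix (Fin n) (Fin n) ℝ) (hQ : Q.PosSemidef) (hB : IsNilpotent B) :
    ∃ c : ℝ, 0 < c ∧
      ∀ t : ℝ, 0 < t → ∀ ξ : Fin n → ℝ, euclNorm ξ = 1 → memSperp n B hQ.sqrt ξ →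
        (∫ α in (0:ℝ)..1,
            euclNorm ((hQ.sqrt * NormedSpace.exp ((α * t) • Bᵀ)).mulVec ξ) ^ 2) ^ ((1:ℝ) / 2) ≤
          c * (∫ α in (0:ℝ)..1,
            euclNorm ((hQ.sqrt * NormedSpace.exp ((α * t) • Bᵀ)).mulVec ξ) ^ (2 * s))
              ^ (1 / (2 * s)) :=
  statement16_general n s hs B Q hQ hB
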